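/- Let k₂(t,s) = (1/6)s(1−t)(2t − s² − t²) for s ≤ t and k₂(t,s) = (1/6)t(1−s)(2s − t² − s²) for s > t, defined on [0,1]×[0,1]; let Φ₂(s) = (√3/27)s(1 − s²)^{3/2} for 0 ≤ s ≤ 1/2 and Φ₂(s) = (√3/27)(1−s)s^{3/2}(2−s)^{3/2} for 1/2 < s ≤ 1; and let c₂(t) = (3√3/2)t(1 − t²) for t ∈ [0,1/2] and c₂(t) = (3√3/2)t(1−t)(2−t) for t ∈ (1/2,1]. Then k₂(t,s) ≥ c₂(t)·Φ₂(s) for all t, s ∈ [0,1]. In particular, for any [a₂,b₂] ⊂ (0,1), k₂(t,s) ≥ c₂·Φ₂(s) for all t ∈ [a₂,b₂] and s ∈ [0,1], where c₂ = min_{t∈[a₂,b₂]} c₂(t) > 0. -/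
import Mathlib

set_option maxHeartbeats 1000000


open Set

/-- The Green's function of the beam problem `v'''' = h`, `v(0) = v''(0) = v(1) = v''(1) = 0`. -/
noncomputable def k2 : ℝ → ℝ → ℝ := fun t s =>
  if s ≤ t then (1/6) * (s * (1 - t) * (2*t - s^2 - t^2))
  else (1/6) * (t * (1 - s) * (2*s - t^2 - s^2))

/-- The upper bound function `Φ₂`. -/
noncomputable def Φ2 : ℝ → ℝ := fun s =>
  if s ≤ 1/2 then (Real.sqrt 3 / 27) * (s * (1 - s^2) ^ ((3:ℝ)/2))
  else (Real.sqrt 3 / 27) * ((1 - s) * s ^ ((3:ℝ)/2) * (2 - s) ^ ((3:ℝ)/2))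

/-- The function `c₂(t)`. -/
noncomputable def c2fun : ℝ → ℝ := fun t =>
  if t ≤ 1/2 then (3 * Real.sqrt 3 / 2) * (t * (1 - t^2))
  else (3 * Real.sqrt 3 / 2) * (t * (1 - t) * (2 - t))

private lemma rpow_bound {x : ℝ} (hx : 0 ≤ x) : x ^ ((3:ℝ)/2) ≤ x*(1+x)/2 := by
  have h1 : x ^ ((3:ℝ)/2) = Real.sqrt (x^3) := by
    rw [show ((3:ℝ)/2) = ((3:ℕ):ℝ) * (1/2) by norm_num, Real.rpow_mul hx,
      Real.rpow_natCast, Real.sqrt_eq_rpow]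
  rw [h1]
  have h2 : x^3 ≤ (x*(1+x)/2)^2 := by nlinarith [sq_nonneg (x*(1-x))]
  calc Real.sqrt (x^3) ≤ Real.sqrt ((x*(1+x)/2)^2) := Real.sqrt_le_sqrt h2
    _ = x*(1+x)/2 := Real.sqrt_sq (by positivity)

private lemma key_const {X Yr K : ℝ} (h : X * Yr ≤ K) :
    3 * Real.sqrt 3 / 2 * X * (Real.sqrt 3 / 27 * Yr) ≤ 1/6 * K := by
  have hrw : 3 * Real.sqrt 3 / 2 * X * (Real.sqrt 3 / 27 * Yr)
      = (Real.sqrt 3 * Real.sqrt 3) / 18 * (X * Yr) := by ring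
  rw [hrw, Real.mul_self_sqrt (by norm_num : (0:ℝ) ≤ 3)]
  linarith

-- the six core polynomial inequalities
private lemma coreA {t s : ℝ} (hs0 : 0 ≤ s) (h3 : s ≤ t) (h1 : t ≤ 1/2) :
    t*(1+t)*((1-s^2)*(2-s^2)) ≤ 2*(2*t-s^2-t^2) := by
  nlinarith [sq_nonneg s, sq_nonneg (1-2*t), mul_nonneg (mul_nonneg hs0 hs0)
    (sub_nonneg.2 (by linarith : 2*t ≤ 1)), sq_nonneg (s*(t-s)), sq_nonneg (s*s),
    mul_nonneg hs0 (sub_nonneg.2 h3), sq_nonneg (t-s), sq_nonneg (s^2*(1-2*t))]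

private lemma coreB {t s : ℝ} (hs0 : 0 ≤ s) (hs2 : s ≤ 1/2) (ht2 : 1/2 ≤ t) (ht1 : t ≤ 1) :
    t*(2-t)*((1-s^2)*(2-s^2)) ≤ 2*(2*t-s^2-t^2) := by
  have hA : 0 ≤ (3 - s^2)*(t*(2-t)) - 2 := by nlinarith [sq_nonneg (1-t), sq_nonneg s]
  nlinarith [mul_nonneg (sq_nonneg s) hA]

private lemma coreC {t s : ℝ} (hs2 : 1/2 ≤ s) (hts : s ≤ t) (ht1 : t ≤ 1) :
    t*(2-t)*((1-s)*(2-s)*(1+2*s-s^2)) ≤ 2*(2*t-s^2-t^2) := by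
  have hs1 : s ≤ 1 := le_trans hts ht1
  rcases eq_or_lt_of_le hs1 with h | h
  · subst h
    have ht : t = 1 := le_antisymm ht1 hts
    subst ht; norm_num
  · have hc : 0 ≤ s^3 - 6*s^2 + 11*s - 4 := by nlinarith [sq_nonneg (s - 11/4)]
    have hqs : 0 ≤ s*(1-s)*(s*(s^3-6*s^2+11*s-4)) :=
      mul_nonneg (mul_nonneg (by linarith) (by linarith)) (mul_nonneg (by linarith) hc)
    have hq1 : 0 ≤ (1-s)*(s*(4*s-1-s^2)) := by
      apply mul_nonneg (by linarith); nlinarith [sq_nonneg (s-1)]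
    have hS : 0 ≤ 2 - (1-s)*(2-s)*(1+2*s-s^2) := by nlinarith [sq_nonneg (1-s), sq_nonneg s]
    have hP3 : 0 ≤ (t-s)*(1-t)*((1-s)*(2 - (1-s)*(2-s)*(1+2*s-s^2))) :=
      mul_nonneg (mul_nonneg (by linarith) (by linarith)) (mul_nonneg (by linarith) hS)
    have hid : (1-s)*(2*(2*t-s^2-t^2) - t*(2-t)*((1-s)*(2-s)*(1+2*s-s^2)))
        = (1-t)*(s*(1-s)*(s*(s^3-6*s^2+11*s-4)))
          + (t-s)*((1-s)*(s*(4*s-1-s^2)))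
          + (t-s)*(1-t)*((1-s)*(2 - (1-s)*(2-s)*(1+2*s-s^2))) := by ring
    nlinarith [mul_nonneg (by linarith : (0:ℝ) ≤ 1-t) hqs,
      mul_nonneg (by linarith : (0:ℝ) ≤ t-s) hq1, hP3, h]

private lemma coreD {t s : ℝ} (ht0 : 0 ≤ t) (hts : t ≤ s) (hs2 : s ≤ 1/2) :
    (1-t^2)*(s*(1+s)*(2-s^2)) ≤ 2*(2*s-t^2-s^2) := by
  have hs0 : 0 ≤ s := le_trans ht0 hts
  have hA : 0 ≤ 4 - (1+s)^2*(2-s^2) := by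
    nlinarith [mul_nonneg (by linarith : (0:ℝ) ≤ 1/2 - s)
      (by nlinarith : (0:ℝ) ≤ 31/8 - s^3 - 5/2*s^2 - 1/4*s)]
  have hB : 0 ≤ 2 - s*(1+s)*(2-s^2) := by nlinarith [sq_nonneg s]
  nlinarith [mul_nonneg (mul_nonneg hs0 (by linarith : (0:ℝ) ≤ 1-s)) hA,
    mul_nonneg (mul_nonneg (sub_nonneg.2 hts) (by linarith : 0 ≤ s+t)) hB]

private lemma coreE {t s : ℝ} (ht0 : 0 ≤ t) (ht2 : t ≤ 1/2) (hs2 : 1/2 ≤ s) (hs1 : s ≤ 1) :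
    (1-t^2)*(s*(2-s)*(1+2*s-s^2)) ≤ 2*(2*s-t^2-s^2) := by
  have hA : 0 ≤ (1-t^2)*(3-(1-s)^2) - 2 := by nlinarith [sq_nonneg t, sq_nonneg (1-s)]
  nlinarith [mul_nonneg (sq_nonneg (1-s)) hA]

private lemma coreF {t s : ℝ} (ht2 : 1/2 ≤ t) (hts : t ≤ s) (hs1 : s ≤ 1) :
    (1-t)*(2-t)*(s*(2-s)*(1+2*s-s^2)) ≤ 2*(2*s-t^2-s^2) := by
  have hs : 1/2 ≤ s := le_trans ht2 hts
  rcases eq_or_lt_of_le hs with h | h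
  · have hteq : t = 1/2 := le_antisymm (h ▸ hts) ht2
    subst hteq; rw [← h]; norm_num
  · have hc : 0 ≤ s^3 - 6*s^2 + 11*s - 4 := by nlinarith [sq_nonneg (s - 11/4)]
    have hqs : 0 ≤ s*(1-s)*(s*(s^3-6*s^2+11*s-4)) :=
      mul_nonneg (mul_nonneg (by linarith) (by linarith)) (mul_nonneg (by linarith) hc)
    have hqhalf : 0 ≤ (1-s)^2*(6*s-2-3*s^2) := by
      apply mul_nonneg (sq_nonneg _); nlinarith [sq_nonneg (1-s)]
    have hR : 0 ≤ 2 + s*(2-s)*(1+2*s-s^2) := by nlinarith [sq_nonneg (1-s)]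
    have hP3 : 0 ≤ (t-1/2)*(s-t)*((s-1/2)*(2 + s*(2-s)*(1+2*s-s^2))) :=
      mul_nonneg (mul_nonneg (by linarith) (by linarith)) (mul_nonneg (by linarith) hR)
    have hid : (s-1/2)*(2*(2*s-t^2-s^2) - (1-t)*(2-t)*(s*(2-s)*(1+2*s-s^2)))
        = (s-t)*((1/4)*((1-s)^2*(6*s-2-3*s^2)))
          + (t-1/2)*(s*(1-s)*(s*(s^3-6*s^2+11*s-4)))
          + (t-1/2)*(s-t)*((s-1/2)*(2 + s*(2-s)*(1+2*s-s^2))) := by ring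
    nlinarith [mul_nonneg (by linarith : (0:ℝ) ≤ s-t) hqhalf,
      mul_nonneg (by linarith : (0:ℝ) ≤ t-1/2) hqs, hP3, h]

-- bounds on the Φ2 factor
private lemma Ybound1 {s : ℝ} (hs0 : 0 ≤ s) (hs2 : s ≤ 1/2) :
    s * (1-s^2) ^ ((3:ℝ)/2) ≤ s * ((1-s^2)*(1+(1-s^2))/2) :=
  mul_le_mul_of_nonneg_left (rpow_bound (by nlinarith)) hs0

private lemma Ybound2 {s : ℝ} (hs0 : 0 ≤ s) (hs1 : s ≤ 1) :
    (1-s) * s ^ ((3:ℝ)/2) * (2-s) ^ ((3:ℝ)/2) ≤ (1-s) * ((s*(2-s))*(1+s*(2-s))/2) := by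
  have hw : (0:ℝ) ≤ s*(2-s) := by nlinarith
  have hmul : (s*(2-s)) ^ ((3:ℝ)/2) = s ^ ((3:ℝ)/2) * (2-s) ^ ((3:ℝ)/2) :=
    Real.mul_rpow hs0 (by linarith)
  calc (1-s) * s ^ ((3:ℝ)/2) * (2-s) ^ ((3:ℝ)/2)
      = (1-s) * ((s*(2-s)) ^ ((3:ℝ)/2)) := by rw [hmul]; ring
    _ ≤ (1-s) * ((s*(2-s))*(1+s*(2-s))/2) :=
        mul_le_mul_of_nonneg_left (rpow_bound hw) (by linarith)

private lemma main_ineq (t s : ℝ) (ht0 : 0 ≤ t) (ht1 : t ≤ 1) (hs0 : 0 ≤ s) (hs1 : s ≤ 1) :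
    c2fun t * Φ2 s ≤ k2 t s := by
  simp only [c2fun, Φ2, k2]
  by_cases h3 : s ≤ t
  · rw [if_pos h3]
    by_cases h1 : t ≤ 1/2
    · -- Case A
      have h2 : s ≤ 1/2 := le_trans h3 h1
      rw [if_pos h1, if_pos h2]
      apply key_const
      refine le_trans (mul_le_mul_of_nonneg_left (Ybound1 hs0 h2) (by nlinarith [mul_nonneg (mul_nonneg ht0 (show (0:ℝ) ≤ 1-t by linarith)) (show (0:ℝ) ≤ 2-t by linarith), mul_nonneg ht0 (show (0:ℝ) ≤ 1-t^2 by nlinarith)])) ?_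
      calc t * (1 - t^2) * (s * ((1-s^2)*(1+(1-s^2))/2))
          = s*(1-t)/2 * (t*(1+t)*((1-s^2)*(2-s^2))) := by ring
        _ ≤ s*(1-t)/2 * (2*(2*t-s^2-t^2)) :=
            mul_le_mul_of_nonneg_left (coreA hs0 h3 h1) (by nlinarith)
        _ = s*(1-t)*(2*t-s^2-t^2) := by ring
    · push_neg at h1
      rw [if_neg (not_le.2 h1)]
      by_cases h2 : s ≤ 1/2
      · -- Case B
        rw [if_pos h2]
        apply key_const
        refine le_trans (mul_le_mul_of_nonneg_left (Ybound1 hs0 h2) (by nlinarith [mul_nonneg (mul_nonneg ht0 (show (0:ℝ) ≤ 1-t by linarith)) (show (0:ℝ) ≤ 2-t by linarith), mul_nonneg ht0 (show (0:ℝ) ≤ 1-t^2 by nlinarith)])) ?_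
        calc t * (1 - t) * (2 - t) * (s * ((1-s^2)*(1+(1-s^2))/2))
            = s*(1-t)/2 * (t*(2-t)*((1-s^2)*(2-s^2))) := by ring
          _ ≤ s*(1-t)/2 * (2*(2*t-s^2-t^2)) :=
              mul_le_mul_of_nonneg_left (coreB hs0 h2 (le_of_lt h1) ht1) (by nlinarith)
          _ = s*(1-t)*(2*t-s^2-t^2) := by ring
      · -- Case C
        push_neg at h2
        rw [if_neg (not_le.2 h2)]
        apply key_const
        refine le_trans (mul_le_mul_of_nonneg_left (Ybound2 hs0 hs1) (by nlinarith [mul_nonneg (mul_nonneg ht0 (show (0:ℝ) ≤ 1-t by linarith)) (show (0:ℝ) ≤ 2-t by linarith), mul_nonneg ht0 (show (0:ℝ) ≤ 1-t^2 by nlinarith)])) ?_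
        calc t * (1 - t) * (2 - t) * ((1-s) * ((s*(2-s))*(1+s*(2-s))/2))
            = s*(1-t)/2 * (t*(2-t)*((1-s)*(2-s)*(1+2*s-s^2))) := by ring
          _ ≤ s*(1-t)/2 * (2*(2*t-s^2-t^2)) :=
              mul_le_mul_of_nonneg_left (coreC (le_of_lt h2) h3 ht1) (by nlinarith)
          _ = s*(1-t)*(2*t-s^2-t^2) := by ring
  · rw [if_neg h3]
    push_neg at h3
    have hts : t ≤ s := le_of_lt h3
    by_cases h2 : s ≤ 1/2
    · -- Case D
      have h1 : t ≤ 1/2 := le_trans hts h2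
      rw [if_pos h1, if_pos h2]
      apply key_const
      refine le_trans (mul_le_mul_of_nonneg_left (Ybound1 hs0 h2) (by nlinarith [mul_nonneg (mul_nonneg ht0 (show (0:ℝ) ≤ 1-t by linarith)) (show (0:ℝ) ≤ 2-t by linarith), mul_nonneg ht0 (show (0:ℝ) ≤ 1-t^2 by nlinarith)])) ?_
      calc t * (1 - t^2) * (s * ((1-s^2)*(1+(1-s^2))/2))
          = t*(1-s)/2 * ((1-t^2)*(s*(1+s)*(2-s^2))) := by ring
        _ ≤ t*(1-s)/2 * (2*(2*s-t^2-s^2)) :=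
            mul_le_mul_of_nonneg_left (coreD ht0 hts h2) (by nlinarith)
        _ = t*(1-s)*(2*s-t^2-s^2) := by ring
    · push_neg at h2
      rw [if_neg (not_le.2 h2)]
      by_cases h1 : t ≤ 1/2
      · -- Case E
        rw [if_pos h1]
        apply key_const
        refine le_trans (mul_le_mul_of_nonneg_left (Ybound2 hs0 hs1) (by nlinarith [mul_nonneg (mul_nonneg ht0 (show (0:ℝ) ≤ 1-t by linarith)) (show (0:ℝ) ≤ 2-t by linarith), mul_nonneg ht0 (show (0:ℝ) ≤ 1-t^2 by nlinarith)])) ?_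
        calc t * (1 - t^2) * ((1-s) * ((s*(2-s))*(1+s*(2-s))/2))
            = t*(1-s)/2 * ((1-t^2)*(s*(2-s)*(1+2*s-s^2))) := by ring
          _ ≤ t*(1-s)/2 * (2*(2*s-t^2-s^2)) :=
              mul_le_mul_of_nonneg_left (coreE ht0 h1 (le_of_lt h2) hs1) (by nlinarith)
          _ = t*(1-s)*(2*s-t^2-s^2) := by ring
      · -- Case F
        push_neg at h1
        rw [if_neg (not_le.2 h1)]
        apply key_const
        refine le_trans (mul_le_mul_of_nonneg_left (Ybound2 hs0 hs1) (by nlinarith [mul_nonneg (mul_nonneg ht0 (show (0:ℝ) ≤ 1-t by linarith)) (show (0:ℝ) ≤ 2-t by linarith), mul_nonneg ht0 (show (0:ℝ) ≤ 1-t^2 by nlinarith)])) ?_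
        calc t * (1 - t) * (2 - t) * ((1-s) * ((s*(2-s))*(1+s*(2-s))/2))
            = t*(1-s)/2 * ((1-t)*(2-t)*(s*(2-s)*(1+2*s-s^2))) := by ring
          _ ≤ t*(1-s)/2 * (2*(2*s-t^2-s^2)) :=
              mul_le_mul_of_nonneg_left (coreF (le_of_lt h1) hts hs1) (by nlinarith)
          _ = t*(1-s)*(2*s-t^2-s^2) := by ring

private lemma Φ2_nonneg {s : ℝ} (hs0 : 0 ≤ s) (hs1 : s ≤ 1) : 0 ≤ Φ2 s := by
  simp only [Φ2]
  split_ifs with h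
  · have : (0:ℝ) ≤ 1 - s^2 := by nlinarith
    positivity
  · have h1 : (0:ℝ) ≤ 1 - s := by linarith
    have h2 : (0:ℝ) ≤ 2 - s := by linarith
    positivity

private lemma c2fun_cont : Continuous c2fun := by
  unfold c2fun
  apply Continuous.if_le (by fun_prop) (by fun_prop) continuous_id continuous_const
  intro x hx
  simp only [id] at hx
  rw [hx]; ring

private lemma c2fun_pos {t : ℝ} (h0 : 0 < t) (h1 : t < 1) : 0 < c2fun t := by
  have h3 : (0:ℝ) < Real.sqrt 3 := Real.sqrt_pos.2 (by norm_num)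
  simp only [c2fun]
  split_ifs with h
  · have : (0:ℝ) < 1 - t^2 := by nlinarith
    positivity
  · have ha : (0:ℝ) < 1 - t := by linarith
    have hb : (0:ℝ) < 2 - t := by linarith
    positivity

/-- Lower bound for the Green's function `k₂`: `k₂(t,s) ≥ c₂(t)Φ₂(s)` on `[0,1]²`; in
particular, for `[a₂,b₂] ⊂ (0,1)`, `k₂(t,s) ≥ c₂ Φ₂(s)` for `t ∈ [a₂,b₂]`, `s ∈ [0,1]`,
where `c₂ = min_{t ∈ [a₂,b₂]} c₂(t) > 0`. -/
theorem k2_lower_bound :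
    (∀ t ∈ Icc (0:ℝ) 1, ∀ s ∈ Icc (0:ℝ) 1, c2fun t * Φ2 s ≤ k2 t s) ∧
    (∀ a₂ b₂ : ℝ, 0 < a₂ → a₂ ≤ b₂ → b₂ < 1 →
      0 < sInf (c2fun '' Icc a₂ b₂) ∧
      ∀ t ∈ Icc a₂ b₂, ∀ s ∈ Icc (0:ℝ) 1, sInf (c2fun '' Icc a₂ b₂) * Φ2 s ≤ k2 t s) := by
  constructor
  · intro t ht s hs
    exact main_ineq t s ht.1 ht.2 hs.1 hs.2
  · intro a b ha hab hb1
    have hK : IsCompact (c2fun '' Icc a b) := (isCompact_Icc).image c2fun_cont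
    have hSne : (c2fun '' Icc a b).Nonempty := (nonempty_Icc.2 hab).image _
    obtain ⟨x, hx, hxe⟩ := hK.sInf_mem hSne
    constructor
    · rw [← hxe]
      exact c2fun_pos (lt_of_lt_of_le ha hx.1) (lt_of_le_of_lt hx.2 hb1)
    · intro t ht s hs
      have h1 : sInf (c2fun '' Icc a b) ≤ c2fun t := csInf_le hK.bddBelow ⟨t, ht, rfl⟩
      calc sInf (c2fun '' Icc a b) * Φ2 s ≤ c2fun t * Φ2 s :=
            mul_le_mul_of_nonneg_right h1 (Φ2_nonneg hs.1 hs.2)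
        _ ≤ k2 t s := main_ineq t s (le_of_lt (lt_of_lt_of_le ha ht.1))
            (le_of_lt (lt_of_le_of_lt ht.2 hb1)) hs.1 hs.2
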